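/- Let μ, σ, σ_Z, μ_Z, ρ > 0, let 0 ≤ t < T, and set κ := μ_Z − σ_Z²/2 − μσ_Z/(2σ) + σσ_Z ρ/μ. Then lim_{r→∞} ∫_t^T ∫_{−∞}^r exp( −ρs + (1 − σσ_Z/μ)x + κ(s−t) ) φ(s−t, x, r) dx ds = 0. -/

import Mathlib

/-!
Up to a factor `exp(linear in x and s)`, `φ(s, x, r)` is the reflection-principle density
`k(s, z)` of a Brownian motion with variance `c = (μ/σ)²` and its running maximum, evaluated at
`z = 2r - x`; let `A` be the total coefficient of `x` in the exponent of the integrand. For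
`0 < s - t ≤ T - t` and `z ≥ 1`, half of the Gaussian factor `exp(-z²/(2c(s-t)))` absorbs the
singular prefactor `(s-t)^{-3/2}` and the other half is at most `exp(-z²/(4c(T-t)))`. Since
`z ≥ r` for `x < r`, the integrand is eventually at most `exp(x + (A-1)r - r²/(4c(T-t)))` up to a
constant, so the double integral is `O(exp(Ar - r²/(4c(T-t))))`: the Gaussian decay in `r` beats
every exponential growth.
-/

/-- The density-type kernel `φ(s,x,y)` from the paper, with `μ̃ = μ/(2σ) − σρ/μ` and
`σ̃ = −μ/σ`. -/
noncomputable def phi (μ σ ρ : ℝ) (s x y : ℝ) : ℝ :=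
  (2 * (2*y - x)) / ((-(μ/σ))^2 * Real.sqrt (2 * (-(μ/σ))^2 * Real.pi * s^3)) *
    Real.exp ((μ/(2*σ) - σ*ρ/μ) / (-(μ/σ)) * x - (1/2) * (μ/(2*σ) - σ*ρ/μ)^2 * s
      - (2*y - x)^2 / (2 * (-(μ/σ))^2 * s))

open Real Filter Topology MeasureTheory Set

/-- The joint density of `(W_s, max_{u ≤ s} W_u)` at `(x, y)`, for a driftless Brownian motion
`W` with variance `c` per unit time, as a function of `z = 2y - x` (reflection principle). -/
noncomputable def reflDensity (c s z : ℝ) : ℝ :=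
  2 * z / (c * √(2 * c * π * s ^ 3)) * exp (-(z ^ 2 / (2 * c * s)))

lemma phi_eq_exp_mul_reflDensity (μ σ ρ s x y : ℝ) :
    phi μ σ ρ s x y =
      exp ((μ/(2*σ) - σ*ρ/μ) / (-(μ/σ)) * x - (1/2) * (μ/(2*σ) - σ*ρ/μ)^2 * s) *
        reflDensity ((μ/σ)^2) s (2*y - x) := by
  rw [phi, reflDensity, neg_sq, sub_eq_add_neg _ ((2*y - x)^2 / _), exp_add]
  ring

lemma reflDensity_nonneg {c s z : ℝ} (hc : 0 ≤ c) (hz : 0 ≤ z) : 0 ≤ reflDensity c s z := by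
  unfold reflDensity
  positivity

lemma exp_neg_le_six_div_pow_three {w : ℝ} (hw : 0 < w) : exp (-w) ≤ 6 / w ^ 3 := by
  have := pow_div_factorial_le_exp w hw.le 3
  rw [exp_neg, inv_le_comm₀ (exp_pos w) (by positivity), inv_div]
  simpa [Nat.factorial] using this

lemma exists_reflDensity_le {c K : ℝ} (hc : 0 < c) (hK : 0 < K) :
    ∃ C, 0 ≤ C ∧
      ∀ s ∈ Ioc 0 K, ∀ z, 1 ≤ z →
        reflDensity c s z ≤ C * exp (-(z ^ 2 / (4 * c * K))) := by
  refine ⟨768 * c ^ 2 * √(K ^ 3) / √(2 * c * π), by positivity,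
    fun s ⟨hs, hsK⟩ z hz => ?_⟩
  have hz0 : 0 < z := one_pos.trans_le hz
  have hsplit : exp (-(z ^ 2 / (2 * c * s))) =
      exp (-(z ^ 2 / (4 * c * s))) * exp (-(z ^ 2 / (4 * c * s))) := by
    rw [← exp_add]; congr 1; field_simp; ring
  have hpoly : exp (-(z ^ 2 / (4 * c * s))) ≤ 384 * c ^ 3 * s ^ 3 / z ^ 6 := by
    refine (exp_neg_le_six_div_pow_three (by positivity)).trans_eq ?_
    field_simp; ring
  have hgauss : exp (-(z ^ 2 / (4 * c * s))) ≤ exp (-(z ^ 2 / (4 * c * K))) := by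
    gcongr
  have hsqrt : √(2 * c * π * s ^ 3) = √(2 * c * π) * √(s ^ 3) := sqrt_mul (by positivity) _
  have hprefactor : 2 * z / (c * √(2 * c * π * s ^ 3)) * (384 * c ^ 3 * s ^ 3 / z ^ 6) ≤
      768 * c ^ 2 * √(K ^ 3) / √(2 * c * π) := by
    have hs3 : s ^ 3 / √(s ^ 3) = √(s ^ 3) := div_sqrt
    calc 2 * z / (c * √(2 * c * π * s ^ 3)) * (384 * c ^ 3 * s ^ 3 / z ^ 6)
        = 768 * c ^ 2 * (s ^ 3 / √(s ^ 3)) / √(2 * c * π) / z ^ 5 := by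
          rw [hsqrt]; field_simp; ring
      _ ≤ 768 * c ^ 2 * √(K ^ 3) / √(2 * c * π) / 1 := by
          rw [hs3]; gcongr; exact one_le_pow₀ hz
      _ = 768 * c ^ 2 * √(K ^ 3) / √(2 * c * π) := div_one _
  rw [reflDensity, hsplit, ← mul_assoc]
  gcongr ?_ * ?_
  exact (mul_le_mul_of_nonneg_left hpoly (by positivity)).trans hprefactor

lemma mul_sub_sq_div_le {a A r x : ℝ} (ha : 0 < a) (hr : a * (1 - A) ≤ 2 * r) (hx : x ≤ r) :
    A * x - (2 * r - x) ^ 2 / a ≤ x + (A - 1) * r - r ^ 2 / a := by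
  rw [← sub_nonneg]
  have key : x + (A - 1) * r - r ^ 2 / a - (A * x - (2 * r - x) ^ 2 / a) =
      (r - x) * (2 * r + (r - x) + (A - 1) * a) / a := by
    field_simp; ring
  rw [key]
  exact div_nonneg (mul_nonneg (by linarith) (by linarith)) ha.le

lemma tendsto_exp_mul_sub_sq_div {a : ℝ} (ha : 0 < a) (A : ℝ) :
    Tendsto (fun r => exp (A * r - r ^ 2 / a)) atTop (𝓝 0) := by
  have hquad : Tendsto (fun r => r * (A + -a⁻¹ * r)) atTop atBot :=
    tendsto_id.atTop_mul_atBot₀ <| tendsto_atBot_add_const_left _ _ <|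
      tendsto_id.const_mul_atTop_of_neg (by simpa using ha)
  refine tendsto_exp_atBot.comp (hquad.congr fun r => ?_)
  field_simp; ring

theorem tendsto_integral_Iio_mul_reflDensity {c t T A B : ℝ} {E : ℝ → ℝ} (hc : 0 < c)
    (htT : t < T) (hE : ∀ s ∈ Ioc t T, ‖E s‖ ≤ B) :
    Tendsto (fun r => ∫ s in t..T, ∫ x in Iio r,
      E s * exp (A * x) * reflDensity c (s - t) (2 * r - x)) atTop (𝓝 0) := by
  obtain ⟨C, hC0, hC⟩ := exists_reflDensity_le hc (sub_pos.2 htT)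
  set a := 4 * c * (T - t)
  have ha : 0 < a := by have := sub_pos.2 htT; positivity
  have hB : 0 ≤ B := (norm_nonneg _).trans (hE T ⟨htT, le_rfl⟩)
  refine squeeze_zero_norm' ?_
    (((tendsto_exp_mul_sub_sq_div ha A).const_mul (B * C)).mul_const (T - t) |>.trans_eq
      (by simp))
  filter_upwards [eventually_ge_atTop (max 1 (a * (1 - A) / 2))] with r hr
  have hr1 : 1 ≤ r := le_of_max_le_left hr
  have hrA : a * (1 - A) ≤ 2 * r := by linarith [le_of_max_le_right hr]
  have hpointwise : ∀ s ∈ Ioc t T, ∀ x < r,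
      ‖E s * exp (A * x) * reflDensity c (s - t) (2 * r - x)‖ ≤
        B * C * exp ((A - 1) * r - r ^ 2 / a) * exp x := by
    intro s hs x hx
    have hk := hC (s - t) ⟨sub_pos.2 hs.1, sub_le_sub_right hs.2 t⟩ (2 * r - x) (by linarith)
    have hz : 0 ≤ 2 * r - x := by linarith
    calc ‖E s * exp (A * x) * reflDensity c (s - t) (2 * r - x)‖
        = ‖E s‖ * (exp (A * x) * reflDensity c (s - t) (2 * r - x)) := by
          rw [mul_assoc, norm_mul, Real.norm_of_nonneg
            (mul_nonneg (exp_pos _).le (reflDensity_nonneg hc.le hz))]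
      _ ≤ B * (exp (A * x) * (C * exp (-((2 * r - x) ^ 2 / a)))) :=
          mul_le_mul (hE s hs) (mul_le_mul_of_nonneg_left hk (exp_pos _).le)
            (mul_nonneg (exp_pos _).le (reflDensity_nonneg hc.le hz)) hB
      _ = B * C * exp (A * x - (2 * r - x) ^ 2 / a) := by
          rw [sub_eq_add_neg _ (_ / a), exp_add]; ring
      _ ≤ B * C * exp (x + (A - 1) * r - r ^ 2 / a) :=
          mul_le_mul_of_nonneg_left (exp_le_exp.2 (mul_sub_sq_div_le ha hrA hx.le))
            (by positivity)
      _ = B * C * exp ((A - 1) * r - r ^ 2 / a) * exp x := by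
          rw [mul_assoc (B * C), ← exp_add]; ring_nf
  have hinner : ∀ s ∈ uIoc t T,
      ‖∫ x in Iio r, E s * exp (A * x) * reflDensity c (s - t) (2 * r - x)‖ ≤
        B * C * exp (A * r - r ^ 2 / a) := by
    intro s hs
    rw [uIoc_of_le htT.le] at hs
    calc _ ≤ ∫ x in Iio r, B * C * exp ((A - 1) * r - r ^ 2 / a) * exp x :=
          norm_integral_le_of_norm_le
            (((integrableOn_exp_Iic r).mono_set Iio_subset_Iic_self).const_mul _)
            ((ae_restrict_iff' measurableSet_Iio).2 (Eventually.of_forall (hpointwise s hs)))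
      _ = B * C * exp (A * r - r ^ 2 / a) := by
          rw [integral_const_mul, ← integral_Iic_eq_integral_Iio, integral_exp_Iic,
            mul_assoc (B * C), ← exp_add]
          ring_nf
  simpa [abs_of_pos (sub_pos.2 htT)] using
    intervalIntegral.norm_integral_le_of_norm_le_const hinner

theorem stmt_8_general (μ σ σZ ρ t T κ : ℝ) (hμ : 0 < μ) (hσ : 0 < σ) (htT : t < T) :
    Filter.Tendsto
      (fun r : ℝ => ∫ s in t..T, ∫ x in Set.Iio r,
        Real.exp (-ρ*s + (1 - σ*σZ/μ)*x + κ*(s-t)) * phi μ σ ρ (s-t) x r)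
      Filter.atTop (nhds 0) := by
  set m := (μ/(2*σ) - σ*ρ/μ) / (-(μ/σ))
  set n := (1/2) * (μ/(2*σ) - σ*ρ/μ)^2
  have hintegrand : ∀ r s x, exp (-ρ*s + (1 - σ*σZ/μ)*x + κ*(s-t)) * phi μ σ ρ (s-t) x r =
      exp (-ρ*s + (κ - n)*(s-t)) * exp ((1 - σ*σZ/μ + m)*x) *
        reflDensity ((μ/σ)^2) (s-t) (2*r - x) := by
    intro r s x
    rw [phi_eq_exp_mul_reflDensity, ← mul_assoc, ← exp_add, ← exp_add]
    congr 2
    ring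
  simp only [hintegrand]
  obtain ⟨B, hB⟩ := isCompact_Icc.exists_bound_of_continuousOn
    (f := fun s => exp (-ρ*s + (κ - n)*(s-t))) (s := Icc t T) (by fun_prop)
  exact tendsto_integral_Iio_mul_reflDensity (by positivity) htT
    fun s hs => hB s (Ioc_subset_Icc_self hs)

/-- The vanishing limit
`lim_{r→∞} ∫_t^T ∫_{−∞}^r exp(−ρs + (1 − σσ_Z/μ)x + κ(s−t)) φ(s−t,x,r) dx ds = 0`,
where `κ = μ_Z − σ_Z²/2 − μσ_Z/(2σ) + σσ_Zρ/μ`. -/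
theorem stmt_8 (μ σ σZ μZ ρ t T κ : ℝ) (hμ : 0 < μ) (hσ : 0 < σ) (hσZ : 0 < σZ)
    (hμZ : 0 < μZ) (hρ : 0 < ρ) (ht : 0 ≤ t) (htT : t < T)
    (hκ : κ = μZ - σZ^2/2 - μ*σZ/(2*σ) + σ*σZ*ρ/μ) :
    Filter.Tendsto
      (fun r : ℝ => ∫ s in t..T, ∫ x in Set.Iio r,
        Real.exp (-ρ*s + (1 - σ*σZ/μ)*x + κ*(s-t)) * phi μ σ ρ (s-t) x r)
      Filter.atTop (nhds 0) :=
  stmt_8_general μ σ σZ ρ t T κ hμ hσ htT
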